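/- arXiv:2203.08980 — 2 statements merged into one kernel-verified Lean document; each statement's English description precedes it below -/
import Mathlib

section
/- The second moment of the bootstrap h-th sample moment satisfies E[X̂_m^2] = (1/m^2)[(2m-1)α_{2h} + (m-1)^2 α_h^2], where X̂_m = (1/m)∑_{j=1}^m (Z*_j)^h is the bootstrap h-th moment. -/
open MeasureTheory ProbabilityTheory

/-- Second moment of the bootstrap `h`-th sample moment.
`Z 0, …, Z (m-1)` are i.i.d. with `E[Z^h] = αh` and `E[Z^(2h)] = α2h`; the
resampling is encoded by uniform random indices `σ j : Ω → Fin m`, jointly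
independent of each other and of the sample `Z` (joint independence of the
family `(σ, Z)` indexed by `Fin m ⊕ Fin m`).  Then
`E[X̂_m²] = (1/m²)·((2m−1)·α2h + (m−1)²·αh²)` where
`X̂_m = (1/m) ∑ j (Z*_j)^h`. -/
theorem bootstrap_moment_sq
    {Ω : Type*} [MeasureSpace Ω] [IsProbabilityMeasure (ℙ : Measure Ω)]
    (m : ℕ) (hm : 0 < m) (h : ℕ) (αh α2h : ℝ)
    (Z : Fin m → Ω → ℝ) (σ : Fin m → Ω → Fin m)
    (hZmeas : ∀ j, Measurable (Z j))
    (hσmeas : ∀ j, Measurable (σ j))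
    (hZint1 : ∀ j, Integrable (fun ω => (Z j ω) ^ h) ℙ)
    (hZint2 : ∀ j, Integrable (fun ω => (Z j ω) ^ (2 * h)) ℙ)
    (hZmom1 : ∀ j, ∫ ω, (Z j ω) ^ h ∂ℙ = αh)
    (hZmom2 : ∀ j, ∫ ω, (Z j ω) ^ (2 * h) ∂ℙ = α2h)
    (hσunif : ∀ j k, ℙ {ω | σ j ω = k} = 1 / m)
    -- joint independence of all resampling indices and all sample points
    (hindep : iIndepFun
      (β := fun t : Fin m ⊕ Fin m => Sum.elim (fun _ : Fin m => Fin m) (fun _ : Fin m => ℝ) t)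
      (m := fun t => by cases t <;> simp only [Sum.elim_inl, Sum.elim_inr] <;> infer_instance)
      (fun t => match t with
        | Sum.inl j => σ j
        | Sum.inr j => Z j) ℙ) :
    ∫ ω, ((1 / (m : ℝ)) * ∑ j : Fin m, (Z (σ j ω) ω) ^ h) ^ 2 ∂ℙ
      = (1 / (m : ℝ) ^ 2) * ((2 * m - 1) * α2h + ((m : ℝ) - 1) ^ 2 * αh ^ 2) := by
  classical
  have hm0 : (m : ℝ) ≠ 0 := Nat.cast_ne_zero.mpr hm.ne'
  -- measurable sets for indicators
  have hsetmeas : ∀ j a, MeasurableSet {ω | σ j ω = a} :=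
    fun j a => (hσmeas j) (measurableSet_singleton a)
  have hImeas : ∀ j a, Measurable (fun ω => if σ j ω = a then (1:ℝ) else 0) :=
    fun j a => Measurable.ite (hsetmeas j a) measurable_const measurable_const
  -- expectation of an indicator
  have hIint : ∀ j a, ∫ ω, (if σ j ω = a then (1:ℝ) else 0) ∂ℙ = 1 / (m:ℝ) := by
    intro j a
    have he : (fun ω => if σ j ω = a then (1:ℝ) else 0)
        = Set.indicator {ω | σ j ω = a} (fun _ => (1:ℝ)) := by
      funext ω; by_cases hc : σ j ω = a <;> simp [hc, Set.indicator_apply]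
    rw [he, integral_indicator_const (1:ℝ) (hsetmeas j a), measureReal_def, hσunif j a]
    simp [ENNReal.toReal_div]
  -- independence of distinct Z's
  have hindZ : ∀ a b : Fin m, a ≠ b → IndepFun (Z a) (Z b) ℙ := by
    intro a b hab
    exact hindep.indepFun (i := Sum.inr a) (j := Sum.inr b) (by simpa using hab)
  have hZZindep : ∀ a b : Fin m, a ≠ b →
      IndepFun (fun ω => Z a ω ^ h) (fun ω => Z b ω ^ h) ℙ := by
    intro a b hab
    exact (hindZ a b hab).comp (measurable_id.pow_const h) (measurable_id.pow_const h)
  -- values and integrability for products of Z powers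
  have hYeval : ∀ a b : Fin m, ∫ ω, Z a ω ^ h * Z b ω ^ h ∂ℙ
      = if a = b then α2h else αh ^ 2 := by
    intro a b
    by_cases hab : a = b
    · subst hab
      rw [if_pos rfl, ← hZmom2 a]
      apply integral_congr_ae
      filter_upwards with ω
      rw [two_mul, pow_add]
    · rw [if_neg hab]
      calc ∫ ω, Z a ω ^ h * Z b ω ^ h ∂ℙ
          = (∫ ω, Z a ω ^ h ∂ℙ) * ∫ ω, Z b ω ^ h ∂ℙ :=
            (hZZindep a b hab).integral_mul_eq_mul_integral
              ((hZmeas a).pow_const h).aestronglyMeasurable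
              ((hZmeas b).pow_const h).aestronglyMeasurable
        _ = αh ^ 2 := by rw [hZmom1, hZmom1, sq]
  have hYint : ∀ a b : Fin m, Integrable (fun ω => Z a ω ^ h * Z b ω ^ h) ℙ := by
    intro a b
    by_cases hab : a = b
    · subst hab
      exact (hZint2 a).congr (by filter_upwards with ω; rw [two_mul, pow_add])
    · exact (hZZindep a b hab).integrable_mul (hZint1 a) (hZint1 b)
  -- expectation of products of indicators
  have hXeval : ∀ j k a b : Fin m,
      ∫ ω, (if σ j ω = a then (1:ℝ) else 0) * (if σ k ω = b then (1:ℝ) else 0) ∂ℙ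
        = if j = k then (if a = b then 1/(m:ℝ) else 0) else 1/(m:ℝ)^2 := by
    intro j k a b
    by_cases hjk : j = k
    · subst hjk
      rw [if_pos rfl]
      by_cases hab : a = b
      · subst hab
        rw [if_pos rfl, ← hIint j a]
        apply integral_congr_ae
        filter_upwards with ω
        by_cases hc : σ j ω = a <;> simp [hc]
      · rw [if_neg hab]
        have hz : ∀ ω, (if σ j ω = a then (1:ℝ) else 0) * (if σ j ω = b then (1:ℝ) else 0) = 0 := by
          intro ω
          by_cases hc : σ j ω = a
          · have hc' : σ j ω ≠ b := fun hb => hab (hc ▸ hb)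
            simp [hc, hab]
          · simp [hc]
        simp [hz]
    · rw [if_neg hjk]
      have h2 : IndepFun (σ j) (σ k) ℙ :=
        hindep.indepFun (i := Sum.inl j) (j := Sum.inl k) (by simpa using hjk)
      have h3 : IndepFun (fun ω => if σ j ω = a then (1:ℝ) else 0)
          (fun ω => if σ k ω = b then (1:ℝ) else 0) ℙ :=
        h2.comp (φ := fun x => if x = a then (1:ℝ) else 0)
          (ψ := fun x => if x = b then (1:ℝ) else 0)
          (measurable_of_countable _) (measurable_of_countable _)
      calc ∫ ω, (if σ j ω = a then (1:ℝ) else 0) * (if σ k ω = b then (1:ℝ) else 0) ∂ℙ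
          = (∫ ω, (if σ j ω = a then (1:ℝ) else 0) ∂ℙ)
            * ∫ ω, (if σ k ω = b then (1:ℝ) else 0) ∂ℙ :=
            h3.integral_mul_eq_mul_integral (hImeas j a).aestronglyMeasurable (hImeas k b).aestronglyMeasurable
        _ = 1/(m:ℝ)^2 := by rw [hIint, hIint]; ring
  -- joint independence of indicator pair and Z pair
  have hmix : ∀ j k a b : Fin m,
      IndepFun (fun ω => (if σ j ω = a then (1:ℝ) else 0) * (if σ k ω = b then (1:ℝ) else 0))
        (fun ω => Z a ω ^ h * Z b ω ^ h) ℙ := by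
    intro j k a b
    have hbase : IndepFun (fun ω => (σ j ω, σ k ω)) (fun ω => (Z a ω, Z b ω)) ℙ := by
      refine hindep.indepFun_prodMk_prodMk (fun t => ?_)
        (Sum.inl j) (Sum.inl k) (Sum.inr a) (Sum.inr b) (by simp) (by simp) (by simp) (by simp)
      cases t with
      | inl x => exact hσmeas x
      | inr x => exact hZmeas x
    exact hbase.comp
      (φ := fun p : Fin m × Fin m => (if p.1 = a then (1:ℝ) else 0) * (if p.2 = b then (1:ℝ) else 0))
      (ψ := fun p : ℝ × ℝ => p.1 ^ h * p.2 ^ h)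
      (measurable_of_countable _)
      ((measurable_fst.pow_const h).mul (measurable_snd.pow_const h))
  -- integrability of the generic term
  have hint : ∀ j k a b : Fin m,
      Integrable (fun ω =>
        ((if σ j ω = a then (1:ℝ) else 0) * (if σ k ω = b then (1:ℝ) else 0))
          * (Z a ω ^ h * Z b ω ^ h)) ℙ := by
    intro j k a b
    refine (hYint a b).bdd_mul ((hImeas j a).mul (hImeas k b)).aestronglyMeasurable (c := 1) (Filter.Eventually.of_forall fun ω => ?_)
    by_cases h1 : σ j ω = a <;> by_cases h2 : σ k ω = b <;> simp [h1, h2]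
  -- value of the generic term
  have hterm : ∀ j k a b : Fin m,
      ∫ ω, ((if σ j ω = a then (1:ℝ) else 0) * (if σ k ω = b then (1:ℝ) else 0))
          * (Z a ω ^ h * Z b ω ^ h) ∂ℙ
        = (if j = k then (if a = b then 1/(m:ℝ) else 0) else 1/(m:ℝ)^2)
          * (if a = b then α2h else αh ^ 2) := by
    intro j k a b
    calc ∫ ω, ((if σ j ω = a then (1:ℝ) else 0) * (if σ k ω = b then (1:ℝ) else 0))
            * (Z a ω ^ h * Z b ω ^ h) ∂ℙ
        = (∫ ω, (if σ j ω = a then (1:ℝ) else 0) * (if σ k ω = b then (1:ℝ) else 0) ∂ℙ)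
          * ∫ ω, Z a ω ^ h * Z b ω ^ h ∂ℙ :=
          (hmix j k a b).integral_mul_eq_mul_integral
            ((hImeas j a).mul (hImeas k b)).aestronglyMeasurable
            (((hZmeas a).pow_const h).mul ((hZmeas b).pow_const h)).aestronglyMeasurable
      _ = _ := by rw [hXeval, hYeval]
  -- pointwise expansion of the square
  have hpt : ∀ ω : Ω, ((1 / (m : ℝ)) * ∑ j : Fin m, (Z (σ j ω) ω) ^ h) ^ 2
      = (1/(m:ℝ))^2 * ∑ j : Fin m, ∑ k : Fin m, ∑ a : Fin m, ∑ b : Fin m,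
          ((if σ j ω = a then (1:ℝ) else 0) * (if σ k ω = b then (1:ℝ) else 0))
            * (Z a ω ^ h * Z b ω ^ h) := by
    intro ω
    rw [mul_pow]
    congr 1
    have h1 : ∀ j : Fin m, Z (σ j ω) ω ^ h
        = ∑ a : Fin m, (if σ j ω = a then (1:ℝ) else 0) * Z a ω ^ h := by
      intro j
      have e : ∀ a : Fin m, (if σ j ω = a then (1:ℝ) else 0) * Z a ω ^ h
          = if σ j ω = a then Z a ω ^ h else 0 := by
        intro a; by_cases hc : σ j ω = a <;> simp [hc]
      simp_rw [e]
      rw [Finset.sum_ite_eq]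
      simp
    calc (∑ j : Fin m, Z (σ j ω) ω ^ h) ^ 2
        = (∑ j : Fin m, ∑ a : Fin m, (if σ j ω = a then (1:ℝ) else 0) * Z a ω ^ h)
          * (∑ k : Fin m, ∑ b : Fin m, (if σ k ω = b then (1:ℝ) else 0) * Z b ω ^ h) := by
          rw [pow_two]; simp_rw [h1]
      _ = ∑ j : Fin m, ∑ k : Fin m,
            (∑ a : Fin m, (if σ j ω = a then (1:ℝ) else 0) * Z a ω ^ h)
            * (∑ b : Fin m, (if σ k ω = b then (1:ℝ) else 0) * Z b ω ^ h) :=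
          Finset.sum_mul_sum _ _ _ _
      _ = ∑ j : Fin m, ∑ k : Fin m, ∑ a : Fin m, ∑ b : Fin m,
            ((if σ j ω = a then (1:ℝ) else 0) * Z a ω ^ h)
            * ((if σ k ω = b then (1:ℝ) else 0) * Z b ω ^ h) :=
          Finset.sum_congr rfl fun j _ => Finset.sum_congr rfl fun k _ =>
            Finset.sum_mul_sum _ _ _ _
      _ = ∑ j : Fin m, ∑ k : Fin m, ∑ a : Fin m, ∑ b : Fin m,
            ((if σ j ω = a then (1:ℝ) else 0) * (if σ k ω = b then (1:ℝ) else 0))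
              * (Z a ω ^ h * Z b ω ^ h) :=
          Finset.sum_congr rfl fun j _ => Finset.sum_congr rfl fun k _ =>
            Finset.sum_congr rfl fun a _ => Finset.sum_congr rfl fun b _ => by ring
  -- the double-sum evaluation lemma
  have hsum : ∀ P Q : ℝ, (∑ a : Fin m, ∑ b : Fin m, if a = b then P else Q)
      = (m:ℝ) * P + ((m:ℝ)^2 - m) * Q := by
    intro P Q
    have e : ∀ a b : Fin m, (if a = b then P else Q) = Q + (if a = b then P - Q else 0) := by
      intro a b; by_cases hab : a = b <;> simp [hab]
    simp_rw [e, Finset.sum_add_distrib, Finset.sum_const, Finset.sum_ite_eq, Finset.mem_univ,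
      if_true, Finset.card_univ, Fintype.card_fin, nsmul_eq_mul]
    rw [Finset.sum_const, Finset.card_univ, Fintype.card_fin, nsmul_eq_mul]
    ring
  -- put everything together
  have hintegrand : ∫ ω, ((1 / (m : ℝ)) * ∑ j : Fin m, (Z (σ j ω) ω) ^ h) ^ 2 ∂ℙ
      = (1/(m:ℝ))^2 * ∑ j : Fin m, ∑ k : Fin m, ∑ a : Fin m, ∑ b : Fin m,
          ∫ ω, ((if σ j ω = a then (1:ℝ) else 0) * (if σ k ω = b then (1:ℝ) else 0))
            * (Z a ω ^ h * Z b ω ^ h) ∂ℙ := by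
    simp_rw [hpt]
    rw [integral_const_mul]
    congr 1
    rw [integral_finset_sum _ (fun j _ => integrable_finset_sum _ fun k _ =>
      integrable_finset_sum _ fun a _ => integrable_finset_sum _ fun b _ => hint j k a b)]
    refine Finset.sum_congr rfl fun j _ => ?_
    rw [integral_finset_sum _ (fun k _ => integrable_finset_sum _ fun a _ =>
      integrable_finset_sum _ fun b _ => hint j k a b)]
    refine Finset.sum_congr rfl fun k _ => ?_
    rw [integral_finset_sum _ (fun a _ => integrable_finset_sum _ fun b _ => hint j k a b)]
    refine Finset.sum_congr rfl fun a _ => ?_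
    exact integral_finset_sum _ fun b _ => hint j k a b
  rw [hintegrand]
  have hinner : ∀ j k : Fin m,
      (∑ a : Fin m, ∑ b : Fin m,
        ∫ ω, ((if σ j ω = a then (1:ℝ) else 0) * (if σ k ω = b then (1:ℝ) else 0))
          * (Z a ω ^ h * Z b ω ^ h) ∂ℙ)
      = if j = k then (m:ℝ) * ((1/(m:ℝ)) * α2h)
        else (m:ℝ) * (1/(m:ℝ)^2 * α2h) + ((m:ℝ)^2 - m) * (1/(m:ℝ)^2 * αh^2) := by
    intro j k
    by_cases hjk : j = k
    · rw [if_pos hjk]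
      have e : ∀ a b : Fin m,
          (∫ ω, ((if σ j ω = a then (1:ℝ) else 0) * (if σ k ω = b then (1:ℝ) else 0))
            * (Z a ω ^ h * Z b ω ^ h) ∂ℙ)
          = if a = b then (1/(m:ℝ)) * α2h else 0 := by
        intro a b
        rw [hterm j k a b, if_pos hjk]
        by_cases hab : a = b <;> simp [hab]
      simp_rw [e]
      rw [hsum]
      ring
    · rw [if_neg hjk]
      have e : ∀ a b : Fin m,
          (∫ ω, ((if σ j ω = a then (1:ℝ) else 0) * (if σ k ω = b then (1:ℝ) else 0))
            * (Z a ω ^ h * Z b ω ^ h) ∂ℙ)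
          = if a = b then 1/(m:ℝ)^2 * α2h else 1/(m:ℝ)^2 * αh^2 := by
        intro a b
        rw [hterm j k a b, if_neg hjk]
        by_cases hab : a = b <;> simp [hab]
      simp_rw [e]
      rw [hsum]
  simp_rw [hinner]
  rw [hsum]
  field_simp
  ring
end

section
/- A sequence of distribution functions F_n converges to F at every continuity point of F if and only if the quantile functions converge at every continuity point of F^{-1}: F_n^{-1}(p) → F^{-1}(p) for every p ∈ (0,1) at which F^{-1} is continuous, where F^{-1}(p) = inf{t : F(t) ≥ p}. -/
open Filter Set Topology

/-- Generalized inverse (quantile function) of a distribution function: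
`F⁻¹(p) = inf {t : F t ≥ p}`. -/
noncomputable def quantileFn (F : ℝ → ℝ) (p : ℝ) : ℝ :=
  sInf {t : ℝ | p ≤ F t}

section Helpers

variable {F : ℝ → ℝ} {p : ℝ}

lemma cdf_nonneg (hmono : Monotone F) (hbot : Tendsto F atBot (nhds 0)) (t : ℝ) :
    0 ≤ F t :=
  le_of_tendsto hbot (eventually_atBot.2 ⟨t, fun s hs => hmono hs⟩)

lemma cdf_le_one (hmono : Monotone F) (htop : Tendsto F atTop (nhds 1)) (t : ℝ) :
    F t ≤ 1 :=
  ge_of_tendsto htop (eventually_atTop.2 ⟨t, fun s hs => hmono hs⟩)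

lemma qset_nonempty (htop : Tendsto F atTop (nhds 1)) (hp : p < 1) :
    {t : ℝ | p ≤ F t}.Nonempty :=
  (htop.eventually (eventually_ge_nhds hp)).exists

lemma qset_bddBelow (hmono : Monotone F) (hbot : Tendsto F atBot (nhds 0)) (hp : 0 < p) :
    BddBelow {t : ℝ | p ≤ F t} := by
  obtain ⟨t₀, ht₀⟩ := (hbot.eventually (eventually_lt_nhds hp)).exists
  exact ⟨t₀, fun s hs => le_of_not_gt fun h => absurd hs (not_le.2 ((hmono h.le).trans_lt ht₀))⟩

/-- If `F x < p` then `x` is a lower bound for the quantile. -/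
lemma le_quantileFn_of_lt (hmono : Monotone F) (htop : Tendsto F atTop (nhds 1))
    (hp : p < 1) {x : ℝ} (hx : F x < p) : x ≤ quantileFn F p := by
  refine le_csInf (qset_nonempty htop hp) fun s hs => le_of_not_gt fun h => ?_
  exact absurd hs (not_le.2 ((hmono h.le).trans_lt hx))

lemma quantileFn_mem (hmono : Monotone F) (hrc : ∀ t, ContinuousWithinAt F (Ici t) t)
    (hbot : Tendsto F atBot (nhds 0)) (htop : Tendsto F atTop (nhds 1))
    (hp : p ∈ Ioo (0 : ℝ) 1) : p ≤ F (quantileFn F p) := by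
  set a := quantileFn F p with ha
  have hbdd := qset_bddBelow hmono hbot hp.1
  have hne := qset_nonempty htop hp.2
  have htend : Tendsto F (𝓝[>] a) (𝓝 (F a)) :=
    ((hrc a).tendsto).mono_left (nhdsWithin_mono a Ioi_subset_Ici_self)
  refine ge_of_tendsto htend ?_
  filter_upwards [self_mem_nhdsWithin] with t (ht : a < t)
  obtain ⟨s, hs, hst⟩ := (csInf_lt_iff hbdd hne).1 ht
  exact le_trans hs (hmono hst.le)

lemma quantileFn_le_iff (hmono : Monotone F) (hrc : ∀ t, ContinuousWithinAt F (Ici t) t)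
    (hbot : Tendsto F atBot (nhds 0)) (htop : Tendsto F atTop (nhds 1))
    (hp : p ∈ Ioo (0 : ℝ) 1) {t : ℝ} : quantileFn F p ≤ t ↔ p ≤ F t := by
  constructor
  · intro h
    exact (quantileFn_mem hmono hrc hbot htop hp).trans (hmono h)
  · intro h
    exact csInf_le (qset_bddBelow hmono hbot hp.1) h

lemma quantileFn_monoOn (hmono : Monotone F) (hbot : Tendsto F atBot (nhds 0))
    (htop : Tendsto F atTop (nhds 1)) {q : ℝ} (hp : p ∈ Ioo (0 : ℝ) 1)
    (hq : q ∈ Ioo (0 : ℝ) 1) (hpq : p ≤ q) : quantileFn F p ≤ quantileFn F q :=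
  csInf_le_csInf (qset_bddBelow hmono hbot hp.1) (qset_nonempty htop hq.2)
    (fun t ht => le_trans hpq ht)

/-- In any nonempty open interval there is a continuity point of a monotone function. -/
lemma exists_continuousAt_of_monotone {G : ℝ → ℝ} (hG : Monotone G) {a b : ℝ} (hab : a < b) :
    ∃ x ∈ Ioo a b, ContinuousAt G x := by
  have hc : Set.Countable {x : ℝ | ¬ContinuousAt G x} := hG.countable_not_continuousAt
  have hd : Dense {x : ℝ | ¬ContinuousAt G x}ᶜ := hc.dense_compl ℝ
  obtain ⟨x, hx1, hx2⟩ :=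
    dense_iff_inter_open.1 hd (Ioo a b) isOpen_Ioo (nonempty_Ioo.2 hab)
  exact ⟨x, hx1, not_not.1 hx2⟩

/-- In any nonempty open subinterval of `[0,1]` there is a continuity point of the quantile
function which lies in `(0,1)`. -/
lemma exists_continuousAt_quantile (hmono : Monotone F) (hbot : Tendsto F atBot (nhds 0))
    (htop : Tendsto F atTop (nhds 1)) {a b : ℝ} (hab : a < b) (ha : 0 ≤ a) (hb : b ≤ 1) :
    ∃ p ∈ Ioo a b, p ∈ Ioo (0 : ℝ) 1 ∧ ContinuousAt (quantileFn F) p := by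
  set a' : ℝ := a + (b - a) / 3 with ha'
  set b' : ℝ := b - (b - a) / 3 with hb'
  have h3 : (0 : ℝ) < (b - a) / 3 := by linarith
  have haa' : a < a' := by simp [ha']; linarith
  have ha'b' : a' < b' := by simp [ha', hb']; linarith
  have hb'b : b' < b := by simp [hb']; linarith
  have ha'0 : 0 < a' := lt_of_le_of_lt ha haa'
  have hb'1 : b' < 1 := lt_of_lt_of_le hb'b hb
  -- clamp into [a', b'] ⊆ (0,1)
  set c : ℝ → ℝ := fun q => max a' (min b' q) with hc
  have hcmem : ∀ q, c q ∈ Ioo (0 : ℝ) 1 := by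
    intro q
    constructor
    · exact lt_of_lt_of_le ha'0 (le_max_left _ _)
    · have : max a' (min b' q) ≤ b' := max_le ha'b'.le (min_le_left _ _)
      exact lt_of_le_of_lt this hb'1
  have hcmono : Monotone c := fun x y hxy =>
    max_le_max le_rfl (min_le_min le_rfl hxy)
  set G : ℝ → ℝ := fun q => quantileFn F (c q) with hG
  have hGmono : Monotone G := fun x y hxy =>
    quantileFn_monoOn hmono hbot htop (hcmem x) (hcmem y) (hcmono hxy)
  obtain ⟨p, hp, hpc⟩ := exists_continuousAt_of_monotone hGmono ha'b'
  have heq : G =ᶠ[𝓝 p] quantileFn F := by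
    filter_upwards [Ioo_mem_nhds hp.1 hp.2] with q hq
    have : c q = q := by
      simp only [hc]
      rw [min_eq_right hq.2.le, max_eq_right hq.1.le]
    simp [hG, this]
  refine ⟨p, ⟨haa'.trans hp.1, hp.2.trans hb'b⟩, ⟨ha'0.trans hp.1, hp.2.trans hb'1⟩, ?_⟩
  exact hpc.congr heq

end Helpers

/-- van der Vaart, Lemma 21.2: a sequence of cdfs `Fₙ` converges to a cdf `F`
at every continuity point of `F` if and only if the quantile functions
converge at every continuity point of `F⁻¹` in `(0,1)`. -/
theorem cdf_tendsto_iff_quantile_tendsto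
    (F : ℕ → ℝ → ℝ) (F₀ : ℝ → ℝ)
    -- each `Fₙ` and `F` is a cumulative distribution function
    (hFmono : ∀ n, Monotone (F n)) (hF₀mono : Monotone F₀)
    (hFrc : ∀ n, ∀ t, ContinuousWithinAt (F n) (Ici t) t)
    (hF₀rc : ∀ t, ContinuousWithinAt F₀ (Ici t) t)
    (hFbot : ∀ n, Tendsto (F n) atBot (nhds 0)) (hFtop : ∀ n, Tendsto (F n) atTop (nhds 1))
    (hF₀bot : Tendsto F₀ atBot (nhds 0)) (hF₀top : Tendsto F₀ atTop (nhds 1)) :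
    (∀ t, ContinuousAt F₀ t → Tendsto (fun n => F n t) atTop (nhds (F₀ t)))
      ↔ (∀ p ∈ Ioo (0 : ℝ) 1, ContinuousAt (quantileFn F₀) p →
          Tendsto (fun n => quantileFn (F n) p) atTop (nhds (quantileFn F₀ p))) := by
  constructor
  · -- cdf convergence implies quantile convergence
    intro H p hp hq
    set q₀ : ℝ := quantileFn F₀ p with hq₀
    refine tendsto_order.2 ⟨?_, ?_⟩
    · -- lower bound
      intro b hb
      obtain ⟨x, hx, hcx⟩ := exists_continuousAt_of_monotone hF₀mono hb
      have hFx : F₀ x < p := by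
        by_contra h
        exact absurd (csInf_le (qset_bddBelow hF₀mono hF₀bot hp.1) (not_lt.1 h)) (not_le.2 hx.2)
      filter_upwards [(H x hcx).eventually (eventually_lt_nhds hFx)] with n hn
      exact lt_of_lt_of_le hx.1 (le_quantileFn_of_lt (hFmono n) (hFtop n) hp.2 hn)
    · -- upper bound
      intro cc hcc
      set c' : ℝ := (q₀ + cc) / 2 with hc'
      have hq₀c' : q₀ < c' := by simp [hc']; linarith
      have hc'cc : c' < cc := by simp [hc']; linarith
      -- find p' ∈ (p, 1) with quantileFn F₀ p' < c'
      have h1 : ∀ᶠ y in 𝓝[>] p, quantileFn F₀ y < c' :=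
        (hq.eventually (eventually_lt_nhds hq₀c')).filter_mono nhdsWithin_le_nhds
      have h2 : Ioo p 1 ∈ 𝓝[>] p := Ioo_mem_nhdsGT_of_mem ⟨le_refl p, hp.2⟩
      obtain ⟨p', hp'q, hp'⟩ := (h1.and (eventually_of_mem h2 fun y hy => hy)).exists
      -- find a continuity point y of F₀ in (quantileFn F₀ p', cc)
      obtain ⟨y, hy, hcy⟩ := exists_continuousAt_of_monotone hF₀mono (hp'q.trans hc'cc)
      have hp'F : p' ≤ F₀ y :=
        (quantileFn_le_iff hF₀mono hF₀rc hF₀bot hF₀top ⟨hp.1.trans hp'.1, hp'.2⟩).1 hy.1.le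
      have hpF : p < F₀ y := lt_of_lt_of_le hp'.1 hp'F
      filter_upwards [(H y hcy).eventually (eventually_gt_nhds hpF)] with n hn
      have : quantileFn (F n) p ≤ y :=
        csInf_le (qset_bddBelow (hFmono n) (hFbot n) hp.1) hn.le
      exact lt_of_le_of_lt this hy.2
  · -- quantile convergence implies cdf convergence
    intro H t hct
    refine tendsto_order.2 ⟨?_, ?_⟩
    · -- lower bound
      intro b hb
      rcases lt_or_ge b 0 with hb0 | hb0
      · exact Eventually.of_forall fun n =>
          lt_of_lt_of_le hb0 (cdf_nonneg (hFmono n) (hFbot n) t)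
      · obtain ⟨p, hpab, hp01, hqc⟩ := exists_continuousAt_quantile hF₀mono hF₀bot hF₀top hb hb0
          (cdf_le_one hF₀mono hF₀top t)
        -- quantileFn F₀ p < t
        have h1 : ∀ᶠ s in 𝓝[<] t, p < F₀ s :=
          (hct.eventually (eventually_gt_nhds hpab.2)).filter_mono nhdsWithin_le_nhds
        obtain ⟨s, hs, hst⟩ := (h1.and (eventually_of_mem self_mem_nhdsWithin fun y hy => hy)).exists
        have hqt : quantileFn F₀ p < t :=
          lt_of_le_of_lt (csInf_le (qset_bddBelow hF₀mono hF₀bot hp01.1) hs.le) hst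
        filter_upwards [(H p hp01 hqc).eventually (eventually_lt_nhds hqt)] with n hn
        have : p ≤ F n t :=
          (quantileFn_le_iff (hFmono n) (hFrc n) (hFbot n) (hFtop n) hp01).1 hn.le
        exact lt_of_lt_of_le hpab.1 this
    · -- upper bound
      intro cc hcc
      rcases lt_or_ge 1 cc with hc1 | hc1
      · exact Eventually.of_forall fun n =>
          lt_of_le_of_lt (cdf_le_one (hFmono n) (hFtop n) t) hc1
      · obtain ⟨p, hpab, hp01, hqc⟩ := exists_continuousAt_quantile hF₀mono hF₀bot hF₀top hcc
          (cdf_nonneg hF₀mono hF₀bot t) hc1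
        -- t < quantileFn F₀ p
        have h1 : ∀ᶠ s in 𝓝[>] t, F₀ s < p :=
          (hct.eventually (eventually_lt_nhds hpab.1)).filter_mono nhdsWithin_le_nhds
        obtain ⟨s, hs, hst⟩ := (h1.and (eventually_of_mem self_mem_nhdsWithin fun y hy => hy)).exists
        have hqt : t < quantileFn F₀ p :=
          lt_of_lt_of_le hst (le_quantileFn_of_lt hF₀mono hF₀top hp01.2 hs)
        filter_upwards [(H p hp01 hqc).eventually (eventually_gt_nhds hqt)] with n hn
        have : F n t < p := by
          by_contra h
          exact absurd (csInf_le (qset_bddBelow (hFmono n) (hFbot n) hp01.1) (not_lt.1 h))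
            (not_le.2 hn)
        exact lt_of_lt_of_le this hpab.2.le
end
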